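/- arXiv:2012.08346 — 5 statements merged into one kernel-verified Lean document; each statement's English description precedes it below -/
import Mathlib

section
/- Let a, k ∈ ℕ with a, k ≥ 1, and let K, K' be two independent random subsets of [ak], each distributed uniformly over all subsets of [ak] of size k. Then for every ε ∈ (0,1): P[|K ∩ K'| ≥ (1+ε)k/a] ≤ 2·exp(−kε²/(3a)) and P[|K ∩ K'| ≤ (1−ε)k/a] ≤ 2·exp(−kε²/(2a)). -/
/-!
For fixed `K`, `|K ∩ K'|` is hypergeometric, and its factorial moments are dominated by those of
the binomial law `Bin(k, 1/a)`: double counting `r`-subsets `S ⊆ K ∩ K'` gives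
`E (|K ∩ K'|)_r = (k)_r ^ 2 / (ak)_r ≤ (k)_r (1/a)^r`, and likewise
`E (|K \ K'|)_r ≤ (k)_r (1 - 1/a)^r`. Markov's inequality for the falling factorial `(x)_r`,
which is positive and increasing on `(r - 1, ∞)`, bounds `P[X ≥ T]` by `E (X)_r / (T)_r`, a
product of `r` ratios. The upper tail takes `X = |K ∩ K'|` and `r = ⌈εk/a⌉` and bounds each ratio
with `2^x ≤ 1 + x` on `[0, 1]`; the lower tail takes `X = |K \ K'| = k - |K ∩ K'|` and `r = ⌈εk⌉`
and uses `1 - u ≤ e^(-u)`. Either way the exponents add up to `∑_{j < ⌈t⌉} (t - j) ≥ t^2 / 2`.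
-/

open Finset Real

namespace Nat

lemma descFactorial_mul_pow_le_pow_mul_descFactorial {m n : ℕ} (hmn : m ≤ n) (r : ℕ) :
    m.descFactorial r * n ^ r ≤ m ^ r * n.descFactorial r := by
  induction r with
  | zero => simp
  | succ r ih =>
    rw [descFactorial_succ, descFactorial_succ, pow_succ, pow_succ]
    have : (m - r) * n ≤ m * (n - r) := by
      rcases le_or_gt r m with h | h
      · have : m * r ≤ r * n := by rw [mul_comm r n]; exact Nat.mul_le_mul_right r hmn
        rw [Nat.sub_mul, Nat.mul_sub]; omega
      · simp [Nat.sub_eq_zero_of_le h.le]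
    calc (m - r) * m.descFactorial r * (n ^ r * n)
        = (m.descFactorial r * n ^ r) * ((m - r) * n) := by ring
      _ ≤ (m ^ r * n.descFactorial r) * (m * (n - r)) := Nat.mul_le_mul ih this
      _ = m ^ r * m * ((n - r) * n.descFactorial r) := by ring

lemma choose_sub_sub_mul_descFactorial {n k r : ℕ} (hrk : r ≤ k) :
    (n - r).choose (k - r) * n.descFactorial r = n.choose k * k.descFactorial r := by
  rw [descFactorial_eq_factorial_mul_choose, descFactorial_eq_factorial_mul_choose]
  calc _ = r ! * (n.choose r * (n - r).choose (k - r)) := by ring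
    _ = _ := by rw [← choose_mul hrk]; ring

lemma choose_sub_mul_descFactorial {n k r : ℕ} (hrk : r ≤ k) (hkn : k ≤ n) :
    (n - r).choose k * n.descFactorial r = n.choose k * (n - k).descFactorial r := by
  rcases le_or_gt (r + k) n with h | h
  · have h₁ := choose_mul (n := n) (k := r + k) (le_add_right r k)
    have h₂ := choose_mul (n := n) (k := r + k) (le_add_left k r)
    rw [choose_symm_add, h₂, Nat.add_sub_cancel, Nat.add_sub_cancel_left] at h₁
    rw [descFactorial_eq_factorial_mul_choose, descFactorial_eq_factorial_mul_choose]
    calc _ = r ! * (n.choose r * (n - r).choose k) := by ring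
      _ = _ := by rw [← h₁]; ring
  · rw [choose_eq_zero_of_lt (n := n - r) (k := k) (by omega),
      descFactorial_eq_zero_iff_lt.2 (by omega : n - k < r)]
    simp

end Nat

namespace Finset

variable {α : Type*} [DecidableEq α]

lemma filter_powersetCard_disjoint (s t : Finset α) (n : ℕ) :
    (t.powersetCard n).filter (Disjoint s ·) = (t \ s).powersetCard n := by
  ext K
  simp only [mem_filter, mem_powersetCard, subset_sdiff, disjoint_comm (a := s)]
  tauto

lemma card_filter_powersetCard_disjoint (s t : Finset α) (n : ℕ) (hst : s ⊆ t) :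
    #((t.powersetCard n).filter (Disjoint s ·)) = (#t - #s).choose n := by
  rw [filter_powersetCard_disjoint s t n, card_powersetCard, card_sdiff_of_subset hst]

variable {U K : Finset α} {k r : ℕ}

lemma sum_choose_card_inter_powersetCard (hKU : K ⊆ U) (hrk : r ≤ k) :
    ∑ K' ∈ U.powersetCard k, (#(K ∩ K')).choose r
      = (#K).choose r * (#U - r).choose (k - r) := by
  have hsub (K' : Finset α) :
      (K ∩ K').powersetCard r = (K.powersetCard r).filter (· ⊆ K') := by
    ext S
    simp only [mem_filter, mem_powersetCard, subset_inter_iff]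
    tauto
  calc ∑ K' ∈ U.powersetCard k, (#(K ∩ K')).choose r
      = ∑ K' ∈ U.powersetCard k,
          #((K.powersetCard r).bipartiteAbove (fun K' S => S ⊆ K') K') := by
        simp_rw [← card_powersetCard, hsub]; rfl
    _ = ∑ S ∈ K.powersetCard r, #((U.powersetCard k).filter (S ⊆ ·)) :=
        sum_card_bipartiteAbove_eq_sum_card_bipartiteBelow _
    _ = ∑ S ∈ K.powersetCard r, (#U - r).choose (k - r) := by
        refine sum_congr rfl fun S hS => ?_
        obtain ⟨hSK, rfl⟩ := mem_powersetCard.1 hS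
        exact card_filter_powersetCard_subset S U k (hSK.trans hKU) hrk
    _ = (#K).choose r * (#U - r).choose (k - r) := by rw [sum_const, card_powersetCard, smul_eq_mul]

lemma sum_choose_card_sdiff_powersetCard (hKU : K ⊆ U) :
    ∑ K' ∈ U.powersetCard k, (#(K \ K')).choose r = (#K).choose r * (#U - r).choose k := by
  have hsub (K' : Finset α) :
      (K \ K').powersetCard r = (K.powersetCard r).filter (Disjoint · K') := by
    ext S
    simp only [mem_filter, mem_powersetCard, subset_sdiff]
    tauto
  calc ∑ K' ∈ U.powersetCard k, (#(K \ K')).choose r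
      = ∑ K' ∈ U.powersetCard k,
          #((K.powersetCard r).bipartiteAbove (fun K' S => Disjoint S K') K') := by
        simp_rw [← card_powersetCard, hsub]; rfl
    _ = ∑ S ∈ K.powersetCard r, #((U.powersetCard k).filter (Disjoint S ·)) :=
        sum_card_bipartiteAbove_eq_sum_card_bipartiteBelow _
    _ = ∑ S ∈ K.powersetCard r, (#U - r).choose k := by
        refine sum_congr rfl fun S hS => ?_
        obtain ⟨hSK, rfl⟩ := mem_powersetCard.1 hS
        exact card_filter_powersetCard_disjoint S U k (hSK.trans hKU)
    _ = (#K).choose r * (#U - r).choose k := by rw [sum_const, card_powersetCard, smul_eq_mul]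

lemma sum_descFactorial_card_inter (hrk : r ≤ k) :
    ∑ p ∈ U.powersetCard k ×ˢ U.powersetCard k, (#(p.1 ∩ p.2)).descFactorial r
      = (#U).choose k * k.descFactorial r * (#U - r).choose (k - r) := by
  simp_rw [Nat.descFactorial_eq_factorial_mul_choose, ← mul_sum, sum_product]
  rw [sum_congr rfl fun K hK => by
    rw [sum_choose_card_inter_powersetCard (mem_powersetCard.1 hK).1 hrk,
      (mem_powersetCard.1 hK).2],
    sum_const, card_powersetCard, smul_eq_mul]
  ring

lemma sum_descFactorial_card_sdiff :
    ∑ p ∈ U.powersetCard k ×ˢ U.powersetCard k, (#(p.1 \ p.2)).descFactorial r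
      = (#U).choose k * k.descFactorial r * (#U - r).choose k := by
  simp_rw [Nat.descFactorial_eq_factorial_mul_choose, ← mul_sum, sum_product]
  rw [sum_congr rfl fun K hK => by
    rw [sum_choose_card_sdiff_powersetCard (mem_powersetCard.1 hK).1, (mem_powersetCard.1 hK).2],
    sum_const, card_powersetCard, smul_eq_mul]
  ring

lemma sum_descFactorial_card_inter_mul_pow_le (hrk : r ≤ k) (hkU : k ≤ #U) :
    (∑ p ∈ U.powersetCard k ×ˢ U.powersetCard k, (#(p.1 ∩ p.2)).descFactorial r) * #U ^ r
      ≤ (#U).choose k ^ 2 * (k.descFactorial r * k ^ r) := by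
  refine Nat.le_of_mul_le_mul_right ?_ (Nat.descFactorial_pos.2 (hrk.trans hkU))
  rw [sum_descFactorial_card_inter hrk]
  calc (#U).choose k * k.descFactorial r * (#U - r).choose (k - r) * #U ^ r * (#U).descFactorial r
      = (#U).choose k * k.descFactorial r * ((#U - r).choose (k - r) * (#U).descFactorial r)
          * #U ^ r := by ring
    _ = (#U).choose k ^ 2 * k.descFactorial r * (k.descFactorial r * #U ^ r) := by
        rw [Nat.choose_sub_sub_mul_descFactorial hrk]; ring
    _ ≤ (#U).choose k ^ 2 * k.descFactorial r * (k ^ r * (#U).descFactorial r) :=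
        Nat.mul_le_mul_left _ (Nat.descFactorial_mul_pow_le_pow_mul_descFactorial hkU r)
    _ = _ := by ring

lemma sum_descFactorial_card_sdiff_mul_pow_le (hrk : r ≤ k) (hkU : k ≤ #U) :
    (∑ p ∈ U.powersetCard k ×ˢ U.powersetCard k, (#(p.1 \ p.2)).descFactorial r) * #U ^ r
      ≤ (#U).choose k ^ 2 * (k.descFactorial r * (#U - k) ^ r) := by
  refine Nat.le_of_mul_le_mul_right ?_ (Nat.descFactorial_pos.2 (hrk.trans hkU))
  rw [sum_descFactorial_card_sdiff]
  calc (#U).choose k * k.descFactorial r * (#U - r).choose k * #U ^ r * (#U).descFactorial r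
      = (#U).choose k * k.descFactorial r * ((#U - r).choose k * (#U).descFactorial r)
          * #U ^ r := by ring
    _ = (#U).choose k ^ 2 * k.descFactorial r * ((#U - k).descFactorial r * #U ^ r) := by
        rw [Nat.choose_sub_mul_descFactorial hrk hkU]; ring
    _ ≤ (#U).choose k ^ 2 * k.descFactorial r * ((#U - k) ^ r * (#U).descFactorial r) :=
        Nat.mul_le_mul_left _
          (Nat.descFactorial_mul_pow_le_pow_mul_descFactorial (Nat.sub_le _ _) r)
    _ = _ := by ring

end Finset

lemma card_filter_mul_descPochhammer_eval_le_sum {ι : Type*} (s : Finset ι) (P : ι → Prop)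
    [DecidablePred P] (X : ι → ℕ) {r : ℕ} {T : ℝ} (hT : (r : ℝ) - 1 ≤ T)
    (hPX : ∀ i ∈ s, P i → T ≤ X i) :
    #(s.filter P) * (descPochhammer ℝ r).eval T
      ≤ ∑ i ∈ s, ((X i).descFactorial r : ℝ) := by
  rw [← nsmul_eq_mul, ← sum_const]
  calc ∑ _ ∈ s.filter P, (descPochhammer ℝ r).eval T
      ≤ ∑ i ∈ s.filter P, ((X i).descFactorial r : ℝ) := by
        refine sum_le_sum fun i hi => ?_
        obtain ⟨hi, hPi⟩ := mem_filter.1 hi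
        have hTX := hPX i hi hPi
        rw [← descPochhammer_eval_eq_descFactorial]
        exact monotoneOn_descPochhammer_eval r hT (hT.trans hTX) hTX
    _ ≤ ∑ i ∈ s, ((X i).descFactorial r : ℝ) :=
        sum_le_sum_of_subset_of_nonneg (filter_subset _ _) fun _ _ _ => by positivity

lemma one_sub_mul_exp_le_one (u : ℝ) : (1 - u) * exp u ≤ 1 :=
  calc (1 - u) * exp u ≤ exp (-u) * exp u := by gcongr; exact one_sub_le_exp_neg u
    _ = 1 := by rw [← exp_add, neg_add_cancel, exp_zero]

lemma sub_mul_exp_div_le {d y T : ℝ} (hd : 0 < d) (hdT : d ≤ T) (hy : 0 ≤ y) (hyd : y ≤ d) :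
    (d - y) * exp (y / T) ≤ d :=
  calc (d - y) * exp (y / T) ≤ (d - y) * exp (y / d) := by
        have : 0 ≤ d - y := sub_nonneg.2 hyd
        gcongr
    _ = d * ((1 - y / d) * exp (y / d)) := by field_simp
    _ ≤ d := mul_le_of_le_one_right hd.le (one_sub_mul_exp_le_one _)

lemma exp_log_two_mul_le_one_add {x : ℝ} (hx0 : 0 ≤ x) (hx1 : x ≤ 1) :
    exp (log 2 * x) ≤ 1 + x := by
  have h := rpow_one_add_le_one_add_mul_self (s := 1) (by norm_num) hx0 hx1
  rwa [one_add_one_eq_two, rpow_def_of_pos two_pos, mul_one] at h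

lemma sq_div_two_le_sum_range_ceil {t : ℝ} (ht : 0 ≤ t) :
    t ^ 2 / 2 ≤ ∑ j ∈ range ⌈t⌉₊, (t - j) := by
  set r := ⌈t⌉₊
  have hgauss : ∀ n : ℕ, ∑ j ∈ range n, (t - j) = n * t - n * (n - 1) / 2 := by
    intro n
    induction n with
    | zero => simp
    | succ n ih => rw [sum_range_succ, ih]; push_cast; ring
  have htr : t ≤ r := Nat.le_ceil t
  have hrt : (r : ℝ) < t + 1 := Nat.ceil_lt_add_one ht
  rw [hgauss]
  nlinarith [mul_nonneg (sub_nonneg.2 htr) (by linarith : (0 : ℝ) ≤ 1 - (r - t))]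

lemma pow_mul_exp_le_descPochhammer_eval {μ ε : ℝ} (hμ : 0 < μ) (hε0 : 0 ≤ ε)
    (hε1 : ε ≤ 1) :
    μ ^ ⌈ε * μ⌉₊ * exp (ε ^ 2 * μ / 3)
      ≤ (descPochhammer ℝ ⌈ε * μ⌉₊).eval ((1 + ε) * μ) := by
  set r := ⌈ε * μ⌉₊
  have hsum : ε ^ 2 * μ / 3 ≤ ∑ j ∈ range r, log 2 * (ε - j / μ) := by
    have h := sq_div_two_le_sum_range_ceil (mul_nonneg hε0 hμ.le)
    have hlog := Real.log_two_gt_d9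
    calc ε ^ 2 * μ / 3 ≤ log 2 / μ * ((ε * μ) ^ 2 / 2) := by
          rw [div_mul_div_comm, le_div_iff₀ (by positivity)]
          nlinarith [sq_nonneg ε, pow_pos hμ 3]
      _ ≤ log 2 / μ * ∑ j ∈ range r, (ε * μ - j) := by gcongr
      _ = ∑ j ∈ range r, log 2 * (ε - j / μ) := by
          rw [mul_sum]; refine sum_congr rfl fun j _ => ?_; field_simp
  calc μ ^ r * exp (ε ^ 2 * μ / 3)
      ≤ μ ^ r * exp (∑ j ∈ range r, log 2 * (ε - j / μ)) := by gcongr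
    _ = ∏ j ∈ range r, (μ * exp (log 2 * (ε - j / μ))) := by
        rw [prod_mul_distrib, prod_const, card_range, exp_sum]
    _ ≤ ∏ j ∈ range r, ((1 + ε) * μ - j) := by
        refine prod_le_prod (fun _ _ => by positivity) fun j hj => ?_
        have hj : (j : ℝ) < ε * μ := Nat.lt_ceil.1 (mem_range.1 hj)
        have hx0 : 0 ≤ ε - j / μ := by rw [sub_nonneg, div_le_iff₀ hμ]; linarith
        have hx1 : ε - j / μ ≤ 1 := (sub_le_self _ (by positivity)).trans hε1
        calc μ * exp (log 2 * (ε - j / μ)) ≤ μ * (1 + (ε - j / μ)) := by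
              gcongr; exact exp_log_two_mul_le_one_add hx0 hx1
          _ = (1 + ε) * μ - j := by field_simp; ring
    _ = _ := (descPochhammer_eval_eq_prod_range _ _).symm

lemma one_sub_pow_mul_descPochhammer_eval_mul_exp_le {k p ε : ℝ} (hk : 0 < k) (hp0 : 0 ≤ p)
    (hp1 : p ≤ 1) (hε0 : 0 < ε) (hε1 : ε ≤ 1) :
    (1 - p) ^ ⌈ε * k⌉₊ * (descPochhammer ℝ ⌈ε * k⌉₊).eval k
        * exp (ε ^ 2 * p * k / 2)
      ≤ (descPochhammer ℝ ⌈ε * k⌉₊).eval ((1 - p + ε * p) * k) := by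
  set r := ⌈ε * k⌉₊
  set T := (1 - p + ε * p) * k with hT_def
  have hεT : ε * k ≤ T := by
    nlinarith [mul_nonneg (mul_nonneg (sub_nonneg.2 hp1) (sub_nonneg.2 hε1)) hk.le]
  have hT0 : 0 < T := by nlinarith
  have hTk : T ≤ k := by nlinarith [mul_nonneg (mul_nonneg hp0 (sub_nonneg.2 hε1)) hk.le]
  have hsum : ε ^ 2 * p * k / 2 ≤ ∑ j ∈ range r, p * (ε * k - j) / T := by
    have h := sq_div_two_le_sum_range_ceil (mul_nonneg hε0.le hk.le)
    calc ε ^ 2 * p * k / 2 = p / k * ((ε * k) ^ 2 / 2) := by field_simp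
      _ ≤ p / T * ((ε * k) ^ 2 / 2) := by gcongr
      _ ≤ p / T * ∑ j ∈ range r, (ε * k - j) := by gcongr
      _ = ∑ j ∈ range r, p * (ε * k - j) / T := by
          rw [mul_sum]; refine sum_congr rfl fun j _ => ?_; ring
  have hkj : ∀ j ∈ range r, (j : ℝ) < ε * k := fun j hj => Nat.lt_ceil.1 (mem_range.1 hj)
  rw [descPochhammer_eval_eq_prod_range, descPochhammer_eval_eq_prod_range]
  calc (1 - p) ^ r * (∏ j ∈ range r, (k - j)) * exp (ε ^ 2 * p * k / 2)
      ≤ (1 - p) ^ r * (∏ j ∈ range r, (k - j))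
          * exp (∑ j ∈ range r, p * (ε * k - j) / T) := by
        have : 0 ≤ ∏ j ∈ range r, (k - j) :=
          prod_nonneg fun j hj => by nlinarith [hkj j hj]
        gcongr
    _ = ∏ j ∈ range r, ((1 - p) * (k - j) * exp (p * (ε * k - j) / T)) := by
        rw [prod_mul_distrib, prod_mul_distrib, prod_const, card_range, exp_sum]
    _ ≤ ∏ j ∈ range r, (T - j) := by
        refine prod_le_prod (fun j hj => ?_) fun j hj => ?_
        · have := hkj j hj
          have : 0 ≤ k - j := by nlinarith
          positivity
        · have hj := hkj j hj
          calc (1 - p) * (k - j) * exp (p * (ε * k - j) / T)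
              = (T - j - p * (ε * k - j)) * exp (p * (ε * k - j) / T) := by rw [hT_def]; ring
            _ ≤ T - j := sub_mul_exp_div_le (by linarith) (by linarith)
                (mul_nonneg hp0 (by linarith)) (by rw [hT_def]; nlinarith)

lemma le_exp_neg_mul_of_mul_le_mul {c C M D x : ℝ} (hD : 0 < D) (hC : 0 ≤ C)
    (hc : c * D ≤ C * M) (hM : M * exp x ≤ D) : c ≤ exp (-x) * C := by
  rw [exp_neg, inv_mul_eq_div, le_div_iff₀ (exp_pos x)]
  refine le_of_mul_le_mul_right ?_ hD
  calc c * exp x * D = c * D * exp x := by ring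
    _ ≤ C * M * exp x := by gcongr
    _ = C * (M * exp x) := by ring
    _ ≤ C * D := by gcongr

section Tails

variable {α : Type*} [DecidableEq α] (U : Finset α) {a k r : ℕ}

lemma sum_descFactorial_card_inter_le (hU : #U = a * k) (ha : 1 ≤ a) (hk : 1 ≤ k)
    (hrk : r ≤ k) :
    ∑ p ∈ U.powersetCard k ×ˢ U.powersetCard k, ((#(p.1 ∩ p.2)).descFactorial r : ℝ)
      ≤ #(U.powersetCard k) ^ 2 * ((k : ℝ) / a) ^ r := by
  have h := sum_descFactorial_card_inter_mul_pow_le hrk (hU ▸ Nat.le_mul_of_pos_left k ha)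
  rw [hU] at h
  have h' : (∑ p ∈ U.powersetCard k ×ˢ U.powersetCard k,
      ((#(p.1 ∩ p.2)).descFactorial r : ℝ)) * ((a : ℝ) * k) ^ r
        ≤ ((a * k).choose k : ℝ) ^ 2 * (k ^ r * k ^ r) := by
    have := Nat.descFactorial_le_pow k r
    exact_mod_cast h.trans (by gcongr)
  rw [card_powersetCard, hU]
  calc _ = _ * ((a : ℝ) * k) ^ r / ((a : ℝ) * k) ^ r :=
        (mul_div_cancel_right₀ _ (by positivity)).symm
    _ ≤ ((a * k).choose k : ℝ) ^ 2 * (k ^ r * k ^ r) / ((a : ℝ) * k) ^ r := by gcongr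
    _ = _ := by rw [div_pow, mul_pow]; field_simp

lemma sum_descFactorial_card_sdiff_le (hU : #U = a * k) (ha : 1 ≤ a) (hk : 1 ≤ k)
    (hrk : r ≤ k) :
    ∑ p ∈ U.powersetCard k ×ˢ U.powersetCard k, ((#(p.1 \ p.2)).descFactorial r : ℝ)
      ≤ #(U.powersetCard k) ^ 2 * ((1 - 1 / (a : ℝ)) ^ r * k.descFactorial r) := by
  have h := sum_descFactorial_card_sdiff_mul_pow_le hrk (hU ▸ Nat.le_mul_of_pos_left k ha)
  rw [hU] at h
  have hcast : ((a * k - k : ℕ) : ℝ) = a * k - k := by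
    rw [Nat.cast_sub (Nat.le_mul_of_pos_left k ha)]; push_cast; ring
  have h' : (∑ p ∈ U.powersetCard k ×ˢ U.powersetCard k,
      ((#(p.1 \ p.2)).descFactorial r : ℝ)) * ((a : ℝ) * k) ^ r
        ≤ ((a * k).choose k : ℝ) ^ 2 * (k.descFactorial r * ((a : ℝ) * k - k) ^ r) := by
    rw [← hcast]; exact_mod_cast h
  rw [card_powersetCard, hU]
  calc _ = _ * ((a : ℝ) * k) ^ r / ((a : ℝ) * k) ^ r :=
        (mul_div_cancel_right₀ _ (by positivity)).symm
    _ ≤ ((a * k).choose k : ℝ) ^ 2 * (k.descFactorial r * ((a : ℝ) * k - k) ^ r)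
          / ((a : ℝ) * k) ^ r := by gcongr
    _ = _ := by
      rw [show 1 - 1 / (a : ℝ) = ((a : ℝ) * k - k) / (a * k) by field_simp, div_pow]; ring

theorem upper_tail_card_inter_le (hU : #U = a * k) (ha : 1 ≤ a) (hk : 1 ≤ k) {ε : ℝ}
    (hε0 : 0 ≤ ε) (hε1 : ε ≤ 1) :
    (#((U.powersetCard k ×ˢ U.powersetCard k).filter
        fun p => (1 + ε) * k / a ≤ (#(p.1 ∩ p.2) : ℝ)) : ℝ)
      ≤ exp (-(k * ε ^ 2) / (3 * a)) * #(U.powersetCard k) ^ 2 := by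
  have ha' : (1 : ℝ) ≤ a := by exact_mod_cast ha
  set μ : ℝ := k / a with hμ_def
  have hμ : 0 < μ := by positivity
  set r := ⌈ε * μ⌉₊
  have hrk : r ≤ k :=
    Nat.ceil_le.2 ((mul_le_of_le_one_left hμ.le hε1).trans (div_le_self (by positivity) ha'))
  have hrT : (r : ℝ) - 1 < (1 + ε) * μ := by
    have := Nat.ceil_lt_add_one (mul_nonneg hε0 hμ.le); nlinarith
  have hmarkov := card_filter_mul_descPochhammer_eval_le_sum
    (U.powersetCard k ×ˢ U.powersetCard k) (fun p => (1 + ε) * k / a ≤ (#(p.1 ∩ p.2) : ℝ))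
    (fun p => #(p.1 ∩ p.2)) hrT.le fun p _ hp => by rwa [mul_div_assoc] at hp
  have hmoment := sum_descFactorial_card_inter_le U hU ha hk hrk
  rw [show -(k * ε ^ 2) / (3 * a) = -(ε ^ 2 * μ / 3) by rw [hμ_def]; ring]
  exact le_exp_neg_mul_of_mul_le_mul (descPochhammer_pos hrT) (by positivity)
    (hmarkov.trans hmoment) (pow_mul_exp_le_descPochhammer_eval hμ hε0 hε1)

theorem lower_tail_card_inter_le (hU : #U = a * k) (ha : 1 ≤ a) (hk : 1 ≤ k) {ε : ℝ}
    (hε0 : 0 < ε) (hε1 : ε ≤ 1) :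
    (#((U.powersetCard k ×ˢ U.powersetCard k).filter
        fun p => (#(p.1 ∩ p.2) : ℝ) ≤ (1 - ε) * k / a) : ℝ)
      ≤ exp (-(k * ε ^ 2) / (2 * a)) * #(U.powersetCard k) ^ 2 := by
  have ha' : (1 : ℝ) ≤ a := by exact_mod_cast ha
  set q : ℝ := 1 / a with hq_def
  have hq0 : 0 ≤ q := by positivity
  have hq1 : q ≤ 1 := div_le_one_of_le₀ ha' (by positivity)
  set r := ⌈ε * k⌉₊
  set T := (1 - q + ε * q) * k with hT_def
  have hrk : r ≤ k := Nat.ceil_le.2 (by nlinarith)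
  have hεT : ε * k ≤ T := by
    nlinarith [mul_nonneg (mul_nonneg (sub_nonneg.2 hq1) (sub_nonneg.2 hε1))
      (by positivity : (0 : ℝ) ≤ k)]
  have hrT : (r : ℝ) - 1 < T := by
    have := Nat.ceil_lt_add_one (by positivity : 0 ≤ ε * k); linarith
  have hmarkov := card_filter_mul_descPochhammer_eval_le_sum
    (U.powersetCard k ×ˢ U.powersetCard k) (fun p => (#(p.1 ∩ p.2) : ℝ) ≤ (1 - ε) * k / a)
    (fun p => #(p.1 \ p.2)) hrT.le fun p hp hle => by
      have hcard := card_sdiff_add_card_inter p.1 p.2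
      rw [(mem_powersetCard.1 (mem_product.1 hp).1).2] at hcard
      have hcard' : (#(p.1 \ p.2) : ℝ) = k - #(p.1 ∩ p.2) := by
        rw [eq_sub_iff_add_eq]; exact_mod_cast hcard
      have : T = k - (1 - ε) * k / a := by rw [hT_def, hq_def]; field_simp; ring
      linarith
  have hmoment := sum_descFactorial_card_sdiff_le U hU ha hk hrk
  have hexp := one_sub_pow_mul_descPochhammer_eval_mul_exp_le (k := k) (by positivity) hq0 hq1
    hε0 hε1
  rw [descPochhammer_eval_eq_descFactorial] at hexp
  rw [show -(k * ε ^ 2) / (2 * a) = -(ε ^ 2 * q * k / 2) by rw [hq_def]; ring]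
  exact le_exp_neg_mul_of_mul_le_mul (descPochhammer_pos hrT) (by positivity)
    (hmarkov.trans hmoment) hexp

end Tails

/-- For `K, K'` independent uniformly random `k`-element subsets of `[ak]`,
`P[|K ∩ K'| ≥ (1+ε)k/a] ≤ 2·exp(−kε²/(3a))` and `P[|K ∩ K'| ≤ (1−ε)k/a] ≤ 2·exp(−kε²/(2a))`.
The probabilities are expressed by counting pairs of `k`-subsets. -/
theorem stmt_5 (a k : ℕ) (ha : 1 ≤ a) (hk : 1 ≤ k) (ε : ℝ) (hε : ε ∈ Set.Ioo (0 : ℝ) 1) :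
    (((((Finset.univ : Finset (Fin (a * k))).powersetCard k) ×ˢ
          ((Finset.univ : Finset (Fin (a * k))).powersetCard k)).filter
        (fun p => (1 + ε) * k / a ≤ ((p.1 ∩ p.2).card : ℝ))).card
      ≤ 2 * Real.exp (-(k * ε ^ 2) / (3 * a)) *
          (((Finset.univ : Finset (Fin (a * k))).powersetCard k).card : ℝ) ^ 2) ∧
    (((((Finset.univ : Finset (Fin (a * k))).powersetCard k) ×ˢ
          ((Finset.univ : Finset (Fin (a * k))).powersetCard k)).filter
        (fun p => ((p.1 ∩ p.2).card : ℝ) ≤ (1 - ε) * k / a)).card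
      ≤ 2 * Real.exp (-(k * ε ^ 2) / (2 * a)) *
          (((Finset.univ : Finset (Fin (a * k))).powersetCard k).card : ℝ) ^ 2) := by
  obtain ⟨hε0, hε1⟩ := hε
  have hU : #(univ : Finset (Fin (a * k))) = a * k := by simp
  have hdouble (x c : ℝ) : exp x * c ^ 2 ≤ 2 * exp x * c ^ 2 := by
    rw [mul_assoc 2]; exact le_mul_of_one_le_left (by positivity) one_le_two
  exact ⟨(upper_tail_card_inter_le _ hU ha hk hε0.le hε1.le).trans (hdouble _ _),
    (lower_tail_card_inter_le _ hU ha hk hε0 hε1.le).trans (hdouble _ _)⟩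
end

section
/- Let A be an m×n real matrix with ‖A_{·,i}‖₂ ≤ C for every column i, and let y ∈ [0,1]^n. Let S = {i ∈ [n] : y_i ∈ (0,1)} be the set of fractional coordinates of y. Then there exists a vector y' ∈ {0,1}^n with ‖A(y − y')‖₂ ≤ C·√|S|/2 and y'_i = y_i for all i ∉ S. -/
lemma aux_round (m n : ℕ) (C : ℝ) (A : Matrix (Fin m) (Fin n) ℝ)
    (hA : ∀ i : Fin n, ∑ j, A j i ^ 2 ≤ C ^ 2)
    (T : Finset (Fin n)) :
    ∀ z : Fin n → ℝ, (∀ i ∈ T, z i ∈ Set.Icc (0:ℝ) 1) →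
    ∀ e : Fin m → ℝ, ∃ y' : Fin n → ℝ,
      (∀ i ∈ T, y' i = 0 ∨ y' i = 1) ∧ (∀ i ∉ T, y' i = z i) ∧
      ∑ j, (e j + A.mulVec (z - y') j) ^ 2 ≤ ∑ j, e j ^ 2 + C ^ 2 / 4 * T.card := by
  induction T using Finset.induction_on with
  | empty =>
    intro z hz e
    refine ⟨z, by simp, fun i _ => rfl, ?_⟩
    simp [sub_self, Matrix.mulVec_zero]
  | @insert i T' hi IH =>
    intro z hz e
    set t := z i with ht
    have htmem : t ∈ Set.Icc (0:ℝ) 1 := hz i (Finset.mem_insert_self _ _)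
    have hcol : (0:ℝ) ≤ ∑ j, A j i ^ 2 := Finset.sum_nonneg fun _ _ => sq_nonneg _
    have key : min (∑ j, (e j + t * A j i)^2) (∑ j, (e j + (t-1) * A j i)^2)
        ≤ ∑ j, e j ^ 2 + C^2/4 := by
      have hconv : (1-t) * (∑ j, (e j + t * A j i)^2) + t * (∑ j, (e j + (t-1) * A j i)^2)
          = ∑ j, e j ^ 2 + t*(1-t) * ∑ j, A j i ^ 2 := by
        rw [Finset.mul_sum, Finset.mul_sum, Finset.mul_sum, ← Finset.sum_add_distrib,
          ← Finset.sum_add_distrib]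
        exact Finset.sum_congr rfl fun j _ => by ring
      have h1 : t*(1-t) ≤ 1/4 := by nlinarith [sq_nonneg (2*t - 1)]
      have h2 : t*(1-t) * ∑ j, A j i ^ 2 ≤ (1/4) * C^2 :=
        mul_le_mul h1 (hA i) hcol (by norm_num)
      have hnn : (0:ℝ) ≤ 1 - t := by linarith [htmem.2]
      have h3 := add_le_add
        (mul_le_mul_of_nonneg_left
          (min_le_left (∑ j, (e j + t * A j i)^2) (∑ j, (e j + (t-1) * A j i)^2))
          hnn)
        (mul_le_mul_of_nonneg_left
          (min_le_right (∑ j, (e j + t * A j i)^2) (∑ j, (e j + (t-1) * A j i)^2))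
          htmem.1)
      rw [hconv] at h3
      nlinarith [h3, h2]
    have main : ∃ b : ℝ, (b = 0 ∨ b = 1) ∧
        ∑ j, (e j + (t - b) * A j i)^2 ≤ ∑ j, e j ^ 2 + C^2/4 := by
      rcases le_total (∑ j, (e j + t*A j i)^2) (∑ j, (e j + (t-1)*A j i)^2) with h | h
      · refine ⟨0, Or.inl rfl, ?_⟩
        rw [min_eq_left h] at key; simpa using key
      · refine ⟨1, Or.inr rfl, ?_⟩
        rw [min_eq_right h] at key; simpa using key
    obtain ⟨b, hb01, hbsum⟩ := main
    set z' := Function.update z i b with hz'def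
    set e' := fun j => e j + (t - b) * A j i with he'def
    have hz'mem : ∀ k ∈ T', z' k ∈ Set.Icc (0:ℝ) 1 := by
      intro k hk
      have hne : k ≠ i := fun h => hi (h ▸ hk)
      rw [hz'def, Function.update_of_ne hne]
      exact hz k (Finset.mem_insert_of_mem hk)
    obtain ⟨y', hy1, hy2, hy3⟩ := IH z' hz'mem e'
    refine ⟨y', ?_, ?_, ?_⟩
    · intro k hk
      rcases Finset.mem_insert.mp hk with rfl | hk'
      · rw [hy2 k hi, hz'def, Function.update_self]; exact hb01
      · exact hy1 k hk'
    · intro k hk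
      have hk' : k ∉ T' := fun h => hk (Finset.mem_insert_of_mem h)
      have hki : k ≠ i := fun h => hk (h ▸ Finset.mem_insert_self i T')
      rw [hy2 k hk', hz'def, Function.update_of_ne hki]
    · have hrw : ∀ j, e j + A.mulVec (z - y') j = e' j + A.mulVec (z' - y') j := by
        intro j
        have hsum : z - y' = (z - z') + (z' - y') := by abel
        have hzz' : A.mulVec (z - z') j = (t - b) * A j i := by
          unfold Matrix.mulVec dotProduct
          rw [Finset.sum_eq_single i]
          · simp [hz'def, Pi.sub_apply, Function.update_self, ht, mul_comm]
          · intro k _ hk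
            simp [hz'def, Pi.sub_apply, Function.update_of_ne hk]
          · simp
        rw [hsum, Matrix.mulVec_add, Pi.add_apply, hzz', he'def]
        ring
      calc ∑ j, (e j + A.mulVec (z - y') j)^2
          = ∑ j, (e' j + A.mulVec (z' - y') j)^2 :=
            Finset.sum_congr rfl fun j _ => by rw [hrw j]
        _ ≤ ∑ j, e' j ^ 2 + C^2/4 * T'.card := hy3
        _ ≤ (∑ j, e j ^ 2 + C^2/4) + C^2/4 * T'.card := by
            have : ∑ j, e' j ^ 2 ≤ ∑ j, e j ^ 2 + C^2/4 := by
              simpa [he'def] using hbsum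
            linarith
        _ = ∑ j, e j ^ 2 + C^2/4 * (insert i T').card := by
            rw [Finset.card_insert_of_notMem hi]
            push_cast; ring

/-- If every column of the `m × n` matrix `A` has Euclidean norm at most `C`
and `y ∈ [0,1]ⁿ` with fractional support `S`, then there is a binary vector `y'` agreeing with
`y` outside `S` such that `‖A(y − y')‖₂ ≤ C·√|S|/2`. -/
theorem stmt_8 (m n : ℕ) (C : ℝ) (A : Matrix (Fin m) (Fin n) ℝ)
    (hA : ∀ i : Fin n, Real.sqrt (∑ j, A j i ^ 2) ≤ C)
    (y : Fin n → ℝ) (hy : ∀ i, y i ∈ Set.Icc (0 : ℝ) 1) :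
    ∃ y' : Fin n → ℝ, (∀ i, y' i = 0 ∨ y' i = 1) ∧
      (∀ i, ¬(0 < y i ∧ y i < 1) → y' i = y i) ∧
      Real.sqrt (∑ j, (A.mulVec (y - y') j) ^ 2)
        ≤ C * Real.sqrt ((Finset.univ.filter fun i => 0 < y i ∧ y i < 1).card) / 2 := by
  set S := Finset.univ.filter fun i : Fin n => 0 < y i ∧ y i < 1 with hSdef
  have hA' : ∀ i : Fin n, ∑ j, A j i ^ 2 ≤ C ^ 2 := by
    intro i
    have h0 : (0:ℝ) ≤ ∑ j, A j i ^ 2 := Finset.sum_nonneg fun _ _ => sq_nonneg _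
    calc ∑ j, A j i ^ 2 = Real.sqrt (∑ j, A j i ^ 2) ^ 2 := (Real.sq_sqrt h0).symm
      _ ≤ C ^ 2 := pow_le_pow_left₀ (Real.sqrt_nonneg _) (hA i) 2
  obtain ⟨y', h1, h2, h3⟩ := aux_round m n C A hA' S y (fun i _ => hy i) 0
  have h3' : ∑ j, (A.mulVec (y - y') j) ^ 2 ≤ C ^ 2 / 4 * S.card := by
    simpa using h3
  refine ⟨y', ?_, ?_, ?_⟩
  · intro i
    by_cases hiS : i ∈ S
    · exact h1 i hiS
    · rw [h2 i hiS]
      have hfrac : ¬(0 < y i ∧ y i < 1) := by simpa [hSdef] using hiS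
      rcases lt_or_eq_of_le (hy i).1 with hl | hl
      · rcases lt_or_eq_of_le (hy i).2 with hr | hr
        · exact absurd ⟨hl, hr⟩ hfrac
        · exact Or.inr hr
      · exact Or.inl hl.symm
  · intro i hi
    exact h2 i (by simpa [hSdef] using hi)
  · rcases Nat.eq_zero_or_pos S.card with hc | hc
    · have hz : ∑ j, (A.mulVec (y - y') j) ^ 2 = 0 :=
        le_antisymm (by simpa [hc] using h3')
          (Finset.sum_nonneg fun _ _ => sq_nonneg _)
      rw [hz, Real.sqrt_zero, hc]
      simp
    · have hC : 0 ≤ C := by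
        obtain ⟨i, _⟩ := Finset.card_pos.mp hc
        exact le_trans (Real.sqrt_nonneg _) (hA i)
      have hcard : (0:ℝ) ≤ (S.card : ℝ) := Nat.cast_nonneg _
      have heq : C^2/4 * S.card = (C * Real.sqrt S.card / 2)^2 := by
        rw [div_pow, mul_pow, Real.sq_sqrt hcard]; ring
      calc Real.sqrt (∑ j, (A.mulVec (y - y') j) ^ 2)
          ≤ Real.sqrt ((C * Real.sqrt S.card / 2)^2) :=
            Real.sqrt_le_sqrt (heq ▸ h3')
        _ = C * Real.sqrt S.card / 2 := Real.sqrt_sq (by positivity)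
end

section
/- Let c ∼ N(0, I_n) be a standard Gaussian vector in ℝ^n, let α ∈ [0, 2√(log 2)], and choose β ∈ [1/2, 1] satisfying H(β) = α²/4, where H(x) = −x·log x − (1−x)·log(1−x) is the natural-base entropy function. Then P[ max{ c·x : x ∈ {0,1}^n, ‖x‖₁ ≥ βn } ≥ αn ] ≤ e^{−α²n/4}. -/
/-!
Union bound over the support `S` of `x`. For a fixed `S` with `βn ≤ |S| ≤ n`, the sum
`∑_{i ∈ S} c_i` is sub-Gaussian with variance proxy `|S|`, so it exceeds `αn` with probability at
most `exp(-α²n²/(2|S|)) ≤ exp(-α²n/2)`. There are at most `exp(n H(β)) = exp(α²n/4)` such `S`: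
for `β ≥ 1/2` each of them has Bernoulli(β) weight `β^|S| (1-β)^(n-|S|) ≥ exp(-n H(β))`, and these
weights sum to `1`.
-/

open MeasureTheory ProbabilityTheory Real Finset
open scoped NNReal ENNReal

lemma hasSubgaussianMGF_id_gaussianReal (v : ℝ≥0) : HasSubgaussianMGF id v (gaussianReal 0 v) where
  integrable_exp_mul t := integrable_exp_mul_gaussianReal t
  mgf_le t := by simp [mgf_id_gaussianReal]

section
variable {ι : Type*} [Fintype ι]

lemma measure_pi_gaussianReal_sum_ge_le (S : Finset ι) {ε : ℝ} (hε : 0 ≤ ε) :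
    (Measure.pi fun _ : ι => gaussianReal 0 1) {c | ε ≤ ∑ i ∈ S, c i}
      ≤ ENNReal.ofReal (exp (-(ε ^ 2 / (2 * #S)))) := by
  have hsubG : ∀ i ∈ S, HasSubgaussianMGF (fun c : ι → ℝ => c i) 1
      (Measure.pi fun _ : ι => gaussianReal 0 1) := fun i _ => by
    rw [← HasSubgaussianMGF.id_map_iff (measurable_pi_apply i).aemeasurable,
      (measurePreserving_eval _ i).map_eq]
    exact hasSubgaussianMGF_id_gaussianReal 1
  have h := HasSubgaussianMGF.measure_sum_ge_le_of_iIndepFun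
    (iIndepFun_pi (X := fun _ => id) fun _ => aemeasurable_id) hsubG hε
  rw [← ofReal_measureReal]
  exact ENNReal.ofReal_le_ofReal (by simpa [neg_div] using h)

lemma measure_pi_gaussianReal_sum_ge_mul_le {S : Finset ι} {a N : ℝ} (ha : 0 ≤ a)
    (hS : 0 < #S) (hSN : #S ≤ N) :
    (Measure.pi fun _ : ι => gaussianReal 0 1) {c | a * N ≤ ∑ i ∈ S, c i}
      ≤ ENNReal.ofReal (exp (-(a ^ 2 * N / 2))) := by
  have hN : 0 < N := (Nat.cast_pos.2 hS).trans_le hSN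
  refine (measure_pi_gaussianReal_sum_ge_le S (by positivity)).trans
    (ENNReal.ofReal_le_ofReal (exp_le_exp.2 ?_))
  calc -((a * N) ^ 2 / (2 * #S)) ≤ -((a * N) ^ 2 / (2 * N)) := by gcongr
    _ = -(a ^ 2 * N / 2) := by field_simp

lemma exp_neg_mul_binEntropy_le_pow_mul_pow {β : ℝ} (hβ : 1 / 2 ≤ β) (hβ1 : β < 1) {k n : ℕ}
    (hkn : k ≤ n) (hk : β * n ≤ k) : exp (-(n * binEntropy β)) ≤ β ^ k * (1 - β) ^ (n - k) := by
  have hβ0 : 0 < β := by linarith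
  have hβ1' : 0 < 1 - β := by linarith
  rw [← exp_log (by positivity : 0 < β ^ k * (1 - β) ^ (n - k)), exp_le_exp,
    log_mul (by positivity) (by positivity), log_pow, log_pow, Nat.cast_sub hkn, binEntropy,
    log_inv, log_inv]
  have hlog : log (1 - β) ≤ log β := log_le_log hβ1' (by linarith)
  nlinarith [mul_nonneg (sub_nonneg.2 hk) (sub_nonneg.2 hlog)]

lemma card_finsets_card_ge_le_exp_binEntropy {β : ℝ} (hβ : 1 / 2 ≤ β) (hβ1 : β < 1) :
    (#{S : Finset ι | β * Fintype.card ι ≤ #S} : ℝ) ≤ exp (Fintype.card ι * binEntropy β) := by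
  set n := Fintype.card ι
  have hw : (#{S : Finset ι | β * n ≤ #S} : ℝ) * exp (-(n * binEntropy β)) ≤ 1 := calc
    _ = ∑ S with β * n ≤ #S, exp (-(n * binEntropy β)) := by rw [sum_const, nsmul_eq_mul]
    _ ≤ ∑ S with β * n ≤ #S, β ^ #S * (1 - β) ^ (n - #S) :=
      sum_le_sum fun S hS =>
        exp_neg_mul_binEntropy_le_pow_mul_pow hβ hβ1 (card_le_univ S) (mem_filter.1 hS).2
    _ ≤ ∑ S : Finset ι, β ^ #S * (1 - β) ^ (n - #S) :=
      sum_le_sum_of_subset_of_nonneg (filter_subset _ _) fun S _ _ => by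
        have : 0 ≤ 1 - β := by linarith
        positivity
    _ = 1 := by rw [Fintype.sum_pow_mul_eq_add_pow, add_sub_cancel, one_pow]
  rwa [exp_neg, ← div_eq_mul_inv, div_le_one (exp_pos _)] at hw

lemma setOf_exists_binary_subset_biUnion (a b : ℝ) :
    {c : ι → ℝ | ∃ x : ι → ℝ, (∀ i, x i = 0 ∨ x i = 1) ∧ b ≤ ∑ i, x i ∧ a ≤ ∑ i, c i * x i}
      ⊆ ⋃ S ∈ ({S | b ≤ #S} : Finset (Finset ι)), {c | a ≤ ∑ i ∈ S, c i} := by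
  classical
  rintro c ⟨x, hx, hb, ha⟩
  set S : Finset ι := {i | x i = 1}
  have hxS : x = fun i => if i ∈ S then 1 else 0 := by
    ext i; rcases hx i with h | h <;> simp [S, h]
  rw [hxS] at hb ha
  simp only [sum_boole, mul_ite, mul_one, mul_zero, sum_ite_mem, univ_inter,
    filter_mem_eq_inter] at hb ha
  exact Set.mem_biUnion (mem_filter.2 ⟨mem_univ _, hb⟩) ha

end

/-- For `c ∼ N(0, Iₙ)`, `α ∈ [0, 2√(log 2)]` and `β ∈ [1/2, 1]` with
`H(β) = α²/4`, the probability that some binary `x` with at least `βn` ones has `c·x ≥ αn`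
is at most `e^{−α²n/4}`. -/
theorem stmt_10 (n : ℕ) (α β : ℝ)
    (hα : α ∈ Set.Icc (0 : ℝ) (2 * Real.sqrt (Real.log 2)))
    (hβ : β ∈ Set.Icc (1 / 2 : ℝ) 1)
    (hH : -β * Real.log β - (1 - β) * Real.log (1 - β) = α ^ 2 / 4) :
    (Measure.pi fun _ : Fin n => gaussianReal 0 1)
      {c | ∃ x : Fin n → ℝ, (∀ i, x i = 0 ∨ x i = 1) ∧ β * n ≤ ∑ i, x i ∧
        α * n ≤ ∑ i, c i * x i}
      ≤ ENNReal.ofReal (Real.exp (-α ^ 2 * n / 4)) := by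
  set μ := Measure.pi fun _ : Fin n => gaussianReal 0 1
  set 𝒮 : Finset (Finset (Fin n)) := {S | β * n ≤ #S}
  replace hH : binEntropy β = α ^ 2 / 4 := by rw [← hH, binEntropy, log_inv, log_inv]; ring
  by_cases h0 : α ^ 2 * n = 0
  · rw [neg_mul, h0, neg_zero, zero_div, exp_zero, ENNReal.ofReal_one]
    exact prob_le_one
  have hn : (0 : ℝ) < n := Nat.cast_pos.2 (Nat.pos_of_ne_zero fun h => h0 (by simp [h]))
  have hβ1 : β < 1 := hβ.2.lt_of_ne fun h => h0 <| by
    rw [h, binEntropy_one] at hH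
    rw [show α ^ 2 = 0 by linarith, zero_mul]
  have hcard : (#𝒮 : ℝ≥0∞) ≤ ENNReal.ofReal (exp (n * (α ^ 2 / 4))) := by
    rw [← ENNReal.ofReal_natCast, ← hH]
    exact ENNReal.ofReal_le_ofReal
      (by simpa using card_finsets_card_ge_le_exp_binEntropy (ι := Fin n) hβ.1 hβ1)
  have hS : ∀ S ∈ 𝒮, μ {c | α * n ≤ ∑ i ∈ S, c i} ≤ ENNReal.ofReal (exp (-(α ^ 2 * n / 2))) :=
    fun S hS => measure_pi_gaussianReal_sum_ge_mul_le hα.1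
      (Nat.cast_pos.1 ((by nlinarith [hβ.1] : (0 : ℝ) < β * n).trans_le (mem_filter.1 hS).2))
      (by exact_mod_cast (card_le_univ S).trans_eq (Fintype.card_fin n))
  calc μ _ ≤ μ (⋃ S ∈ 𝒮, {c | α * n ≤ ∑ i ∈ S, c i}) :=
        measure_mono (setOf_exists_binary_subset_biUnion _ _)
    _ ≤ ∑ S ∈ 𝒮, μ {c | α * n ≤ ∑ i ∈ S, c i} := measure_biUnion_finset_le _ _
    _ ≤ #𝒮 * ENNReal.ofReal (exp (-(α ^ 2 * n / 2))) := by simpa using sum_le_sum hS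
    _ ≤ ENNReal.ofReal (exp (n * (α ^ 2 / 4))) * ENNReal.ofReal (exp (-(α ^ 2 * n / 2))) := by
        gcongr
    _ = ENNReal.ofReal (exp (-α ^ 2 * n / 4)) := by
        rw [← ENNReal.ofReal_mul (exp_nonneg _), ← exp_add]
        ring_nf
end

section
/- Let ω₁, …, ω_n be independent real continuous random variables, each with maximum density at most 1. Then for any g ≥ 0, E[ |{x ∈ {0,1}^n : Σ_{i=1}^n x_i·|ω_i| ≤ g}| ] ≤ e^{2√(2ng)}. -/
open MeasureTheory ProbabilityTheory ENNReal

/-- A real random variable (with law `μ`) is continuous with maximum density at most `M`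
if its law has a density `f` w.r.t. Lebesgue measure with `0 ≤ f ≤ M` pointwise. -/
def HasMaxDensityLE (μ : Measure ℝ) (M : ℝ) : Prop :=
  ∃ f : ℝ → ℝ, μ = MeasureTheory.volume.withDensity (fun x => ENNReal.ofReal (f x)) ∧
    ∀ x, 0 ≤ f x ∧ f x ≤ M

/-!
Write the count as `∑_{S ⊆ [n]} 1[∑_{i ∈ S} |ωᵢ| ≤ g]`. The density bound says that each law is
dominated by Lebesgue measure, so integrating out the coordinates of `S` one at a time bounds the
probability of the `S`-th event by the volume `(2g)^|S| / |S|!` of the `ℓ¹`-ball of radius `g` in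
`ℝ^S`. Hence the expectation is at most `∑ₘ C(n,m) (2g)ᵐ/m! ≤ ∑ₘ (√(2ng)ᵐ/m!)² ≤ e^{2√(2ng)}`.
-/

open Real Finset Nat

theorem HasMaxDensityLE.le_smul_volume {ν : Measure ℝ} {M : ℝ} (h : HasMaxDensityLE ν M) :
    ν ≤ ENNReal.ofReal M • volume := by
  obtain ⟨f, rfl, hf⟩ := h
  rw [← withDensity_const]
  exact withDensity_mono (.of_forall fun x => ENNReal.ofReal_le_ofReal (hf x).2)

-- Vanishing for `r < 0` makes `∫ t, l1BallVolume k (r - |t|) = l1BallVolume (k + 1) r` hold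
-- for every `r`, which is what the induction over coordinates needs.
noncomputable def l1BallVolume (k : ℕ) (r : ℝ) : ℝ :=
  if 0 ≤ r then (2 * r) ^ k / k ! else 0

theorem l1BallVolume_nonneg (k : ℕ) (r : ℝ) : 0 ≤ l1BallVolume k r := by
  unfold l1BallVolume; split_ifs <;> positivity

theorem integrable_l1BallVolume_sub_abs (k : ℕ) (r : ℝ) :
    Integrable fun t => l1BallVolume k (r - |t|) := by
  have hindicator : (fun t => l1BallVolume k (r - |t|)) =
      (Set.Icc (-r) r).indicator fun t => (2 * (r - |t|)) ^ k / k ! := by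
    ext t
    simp only [l1BallVolume, Set.indicator, Set.mem_Icc, ← abs_le, sub_nonneg]
  rw [hindicator]
  exact (Continuous.integrableOn_Icc (by fun_prop)).integrable_indicator measurableSet_Icc

theorem integral_l1BallVolume_sub_abs (k : ℕ) (r : ℝ) :
    ∫ t, l1BallVolume k (r - |t|) = l1BallVolume (k + 1) r := by
  rw [integral_comp_abs (f := fun t => l1BallVolume k (r - t))]
  rcases lt_or_ge r 0 with hr | hr
  · have hzero : Set.EqOn (fun t => l1BallVolume k (r - t)) 0 (Set.Ioi 0) :=
      fun t (ht : 0 < t) => by simp [l1BallVolume, show ¬ 0 ≤ r - t by linarith]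
    rw [setIntegral_congr_fun measurableSet_Ioi hzero]
    simp [l1BallVolume, hr.not_ge]
  · have hsupp : ∀ t ∈ Set.Ioi 0 \ Set.Ioc 0 r, l1BallVolume k (r - t) = 0 := fun t ht => by
      simp_all [l1BallVolume]
    have hpoly : Set.EqOn (fun t => l1BallVolume k (r - t)) (fun t => (2 * (r - t)) ^ k / k !)
        (Set.Ioc 0 r) := fun t ht => by simp [l1BallVolume, ht.2]
    rw [setIntegral_eq_of_subset_of_forall_sdiff_eq_zero measurableSet_Ioi
        Set.Ioc_subset_Ioi_self hsupp,
      setIntegral_congr_fun measurableSet_Ioc hpoly, ← intervalIntegral.integral_of_le hr]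
    simp only [intervalIntegral.integral_div, mul_pow, intervalIntegral.integral_const_mul,
      intervalIntegral.integral_comp_sub_left (fun t => t ^ k), integral_pow, l1BallVolume,
      if_pos hr, factorial_succ]
    push_cast
    field_simp
    ring

def l1Cylinder {ι : Type*} (s : Finset ι) (r : ℝ) : Set (ι → ℝ) :=
  {w | ∑ i ∈ s, |w i| ≤ r}

theorem measurableSet_l1Cylinder {ι : Type*} (s : Finset ι) (r : ℝ) :
    MeasurableSet (l1Cylinder s r) :=
  measurableSet_le (by fun_prop) measurable_const

section

variable {ι : Type*} [DecidableEq ι] {μ : ι → Measure ℝ}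

theorem indicator_l1Cylinder_insert_update {j : ι} {s : Finset ι} (hj : j ∉ s) (r t : ℝ) :
    (l1Cylinder (insert j s) r).indicator 1 ∘ (Function.update · j t) =
      (l1Cylinder s (r - |t|)).indicator (1 : (ι → ℝ) → ℝ≥0∞) := by
  ext w
  have hs : ∑ i ∈ s, |Function.update w j t i| = ∑ i ∈ s, |w i| :=
    sum_congr rfl fun i hi => by rw [Function.update_of_ne (ne_of_mem_of_not_mem hi hj)]
  simp only [Function.comp_apply, Set.indicator_apply, l1Cylinder, Set.mem_ofPred_eq,
    Pi.one_apply, sum_insert hj, Function.update_self, hs, le_sub_iff_add_le']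

theorem lmarginal_indicator_l1Cylinder_le [∀ i, SigmaFinite (μ i)] (hμ : ∀ i, μ i ≤ volume)
    (s : Finset ι) (r : ℝ) (x : ι → ℝ) :
    (∫⋯∫⁻_s, (l1Cylinder s r).indicator 1 ∂μ) x ≤ ENNReal.ofReal (l1BallVolume #s r) := by
  induction s using Finset.induction_on generalizing r x with
  | empty =>
    simp only [lmarginal_empty, l1Cylinder, sum_empty, Set.indicator_apply, Set.mem_ofPred_eq,
      Pi.one_apply, l1BallVolume, card_empty, pow_zero, factorial_zero, cast_one, div_one]
    split_ifs <;> simp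
  | insert j s hj ih =>
    have hmeas : Measurable ((l1Cylinder (insert j s) r).indicator (1 : (ι → ℝ) → ℝ≥0∞)) :=
      measurable_one.indicator (measurableSet_l1Cylinder _ _)
    rw [lmarginal_insert _ hmeas hj]
    calc ∫⁻ t, (∫⋯∫⁻_s, (l1Cylinder (insert j s) r).indicator 1 ∂μ) (Function.update x j t) ∂μ j
        = ∫⁻ t, (∫⋯∫⁻_s, (l1Cylinder s (r - |t|)).indicator 1 ∂μ) x ∂μ j := by
          simp_rw [lmarginal_update_of_notMem hmeas hj, indicator_l1Cylinder_insert_update hj]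
      _ ≤ ∫⁻ t, ENNReal.ofReal (l1BallVolume #s (r - |t|)) ∂μ j := lintegral_mono fun t => ih _ _
      _ ≤ ∫⁻ t, ENNReal.ofReal (l1BallVolume #s (r - |t|)) := lintegral_mono' (hμ j) le_rfl
      _ = ENNReal.ofReal (l1BallVolume #(insert j s) r) := by
          rw [← ofReal_integral_eq_lintegral_ofReal (integrable_l1BallVolume_sub_abs _ _)
            (.of_forall fun t => l1BallVolume_nonneg _ _), integral_l1BallVolume_sub_abs,
            card_insert_of_notMem hj]

theorem pi_l1Cylinder_le [Fintype ι] [∀ i, IsProbabilityMeasure (μ i)] (hμ : ∀ i, μ i ≤ volume)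
    (s : Finset ι) (r : ℝ) :
    Measure.pi μ (l1Cylinder s r) ≤ ENNReal.ofReal (l1BallVolume #s r) := by
  rw [← lintegral_indicator_one (measurableSet_l1Cylinder s r)]
  calc ∫⁻ w, (l1Cylinder s r).indicator 1 w ∂Measure.pi μ
      ≤ ∫⁻ _, ENNReal.ofReal (l1BallVolume #s r) ∂Measure.pi μ := by
        refine lintegral_le_of_lmarginal_le s (measurable_one.indicator
          (measurableSet_l1Cylinder s r)) measurable_const fun x => ?_
        simpa [lmarginal] using lmarginal_indicator_l1Cylinder_le hμ s r x
    _ = ENNReal.ofReal (l1BallVolume #s r) := by simp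

end

theorem ncard_zero_one_vectors_eq_card {ι : Type*} [Fintype ι] [DecidableEq ι] (a : ι → ℝ)
    (r : ℝ) :
    {x : ι → ℝ | (∀ i, x i = 0 ∨ x i = 1) ∧ ∑ i, x i * a i ≤ r}.ncard =
      #{s : Finset ι | ∑ i ∈ s, a i ≤ r} := by
  set χ : Finset ι → ι → ℝ := fun s i => if i ∈ s then 1 else 0
  have hχ_inj : Function.Injective χ := fun s t hst => by
    ext i
    have := congrFun hst i
    simp only [χ] at this
    split_ifs at this <;> simp_all
  have hχ_sum (s : Finset ι) : ∑ i, χ s i * a i = ∑ i ∈ s, a i := by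
    simp [χ, ite_mul]
  have hχ_image : {x : ι → ℝ | (∀ i, x i = 0 ∨ x i = 1) ∧ ∑ i, x i * a i ≤ r} =
      χ '' ↑({s | ∑ i ∈ s, a i ≤ r} : Finset (Finset ι)) := by
    ext x
    constructor
    · rintro ⟨hx01, hxr⟩
      have hx : χ ({i | x i = 1} : Finset ι) = x :=
        funext fun i => by rcases hx01 i with h | h <;> simp [χ, h]
      refine ⟨_, ?_, hx⟩
      simpa [← hχ_sum, hx] using hxr
    · rintro ⟨s, hs, rfl⟩
      refine ⟨fun i => by by_cases hi : i ∈ s <;> simp [χ, hi], ?_⟩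
      simpa [hχ_sum] using hs
  rw [hχ_image, Set.ncard_image_of_injective _ hχ_inj, Set.ncard_coe_finset]

theorem lintegral_card_sum_abs_le {ι : Type*} [Fintype ι] (ν : Measure (ι → ℝ)) (r : ℝ) :
    ∫⁻ w, (#{s : Finset ι | ∑ i ∈ s, |w i| ≤ r} : ℝ≥0∞) ∂ν = ∑ s, ν (l1Cylinder s r) := by
  have hcard (w : ι → ℝ) :
      (#{s : Finset ι | ∑ i ∈ s, |w i| ≤ r} : ℝ≥0∞) = ∑ s, (l1Cylinder s r).indicator 1 w := by
    rw [card_filter]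
    push_cast
    simp [Set.indicator_apply, l1Cylinder]
  simp_rw [hcard]
  rw [lintegral_finsetSum _ fun s _ => measurable_one.indicator (measurableSet_l1Cylinder s r)]
  simp_rw [lintegral_indicator_one (measurableSet_l1Cylinder _ _)]

theorem sum_choose_mul_pow_div_factorial_le_exp (n : ℕ) {x : ℝ} (hx : 0 ≤ x) :
    ∑ m ∈ range (n + 1), n.choose m * (x ^ m / m !) ≤ exp (2 * √(n * x)) := by
  set a := √(n * x)
  have ha : a ^ 2 = n * x := sq_sqrt (by positivity)
  calc ∑ m ∈ range (n + 1), n.choose m * (x ^ m / m !)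
      ≤ ∑ m ∈ range (n + 1), (a ^ m / m !) ^ 2 := by
        gcongr with m
        calc n.choose m * (x ^ m / m !) ≤ n ^ m / m ! * (x ^ m / m !) := by
              gcongr; exact choose_le_pow_div m n
          _ = (a ^ m / m !) ^ 2 := by rw [div_pow, ← pow_mul, mul_comm m 2, pow_mul, ha]; ring
    _ ≤ (∑ m ∈ range (n + 1), a ^ m / m !) ^ 2 :=
        sum_sq_le_sq_sum_of_nonneg fun m _ => by positivity
    _ ≤ exp a ^ 2 := by gcongr; exact sum_le_exp_of_nonneg (sqrt_nonneg _) _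
    _ = exp (2 * a) := by rw [← exp_nat_mul]; norm_num

/-- if `ω₁, …, ωₙ` are independent real random variables with maximum
density at most `1`, then for any `g ≥ 0`,
`E[ |{x ∈ {0,1}ⁿ : Σᵢ xᵢ·|ωᵢ| ≤ g}| ] ≤ e^{2√(2ng)}`. -/
theorem stmt_14 (n : ℕ) (g : ℝ) (hg : 0 ≤ g) (μ : Fin n → Measure ℝ)
    [∀ i, IsProbabilityMeasure (μ i)]
    (hdens : ∀ i, HasMaxDensityLE (μ i) 1) :
    ∫⁻ w, (({x : Fin n → ℝ | (∀ i, x i = 0 ∨ x i = 1) ∧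
        ∑ i, x i * |w i| ≤ g}.ncard : ℝ≥0∞)) ∂(Measure.pi μ)
      ≤ ENNReal.ofReal (Real.exp (2 * Real.sqrt (2 * n * g))) := by
  have hμ (i : Fin n) : μ i ≤ volume := by simpa using (hdens i).le_smul_volume
  simp_rw [ncard_zero_one_vectors_eq_card]
  calc ∫⁻ w, (#{s : Finset (Fin n) | ∑ i ∈ s, |w i| ≤ g} : ℝ≥0∞) ∂Measure.pi μ
      = ∑ s : Finset (Fin n), Measure.pi μ (l1Cylinder s g) := lintegral_card_sum_abs_le _ g
    _ ≤ ∑ s : Finset (Fin n), ENNReal.ofReal (l1BallVolume #s g) := by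
        gcongr with s; exact pi_l1Cylinder_le hμ s g
    _ = ENNReal.ofReal (∑ m ∈ range (n + 1), n.choose m * ((2 * g) ^ m / m !)) := by
        rw [← ofReal_sum_of_nonneg fun s _ => l1BallVolume_nonneg _ _, ← powerset_univ,
          sum_powerset_apply_card fun m => l1BallVolume m g]
        simp [l1BallVolume, hg]
    _ ≤ ENNReal.ofReal (exp (2 * √(2 * n * g))) := by
        gcongr
        convert sum_choose_mul_pow_div_factorial_le_exp n (by positivity : 0 ≤ 2 * g) using 4
        ring
end

section
/- Let ω₁, …, ω_n be i.i.d. random variables uniform on [0,1], and let 1 ≤ G ≤ n with √(nG) ≥ 1. Then E[ |{x ∈ {0,1}^n : Σ_{i=1}^n x_i·ω_i ≤ G}| ] ≥ (1/2)·2^{⌊√(nG)⌋}. -/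
-- (n/j)^j ≤ C(n,j)
open Finset in
lemma choose_lb (n j : ℕ) (h : j ≤ n) : ((n : ℝ) / j) ^ j ≤ (n.choose j : ℝ) := by
  rcases Nat.eq_zero_or_pos j with hj | hj
  · simp [hj]
  have hjR : (0 : ℝ) < j := by exact_mod_cast hj
  have hdesc : ((n.descFactorial j : ℕ) : ℝ) = ∏ i ∈ range j, ((n : ℝ) - i) := by
    rw [Nat.descFactorial_eq_prod_range, Nat.cast_prod]
    refine Finset.prod_congr rfl fun i hi => ?_
    have : i ≤ n := le_trans (le_of_lt (mem_range.1 hi)) h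
    push_cast [Nat.cast_sub this]
    ring
  have hfact : (Nat.factorial j : ℝ) = ∏ i ∈ range j, ((j : ℝ) - i) := by
    rw [← Nat.descFactorial_self, Nat.descFactorial_eq_prod_range, Nat.cast_prod]
    refine Finset.prod_congr rfl fun i hi => ?_
    have : i ≤ j := le_of_lt (mem_range.1 hi)
    push_cast [Nat.cast_sub this]
    ring
  have key : ∏ i ∈ range j, (((n : ℝ) / j) * ((j : ℝ) - i)) ≤ ∏ i ∈ range j, ((n : ℝ) - i) := by
    refine Finset.prod_le_prod (fun i hi => ?_) (fun i hi => ?_)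
    · have hij : (i : ℝ) ≤ j := by exact_mod_cast le_of_lt (mem_range.1 hi)
      have : (0:ℝ) ≤ (n:ℝ)/j := by positivity
      nlinarith
    · have hij : (i : ℝ) < j := by exact_mod_cast mem_range.1 hi
      have hnj : (j : ℝ) ≤ n := by exact_mod_cast h
      rw [div_mul_eq_mul_div, div_le_iff₀ hjR]
      nlinarith [hij.le, Nat.cast_nonneg (α := ℝ) i]
  have hlhs : ∏ i ∈ range j, (((n : ℝ) / j) * ((j : ℝ) - i))
      = ((n : ℝ) / j) ^ j * (Nat.factorial j : ℝ) := by
    rw [Finset.prod_mul_distrib, Finset.prod_const, Finset.card_range, hfact]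
  have hdc : (n.descFactorial j : ℝ) = (Nat.factorial j : ℝ) * (n.choose j : ℝ) := by
    exact_mod_cast congrArg (Nat.cast (R := ℝ)) (Nat.descFactorial_eq_factorial_mul_choose n j)
  have hfpos : (0:ℝ) < (Nat.factorial j : ℝ) := by exact_mod_cast j.factorial_pos
  have : ((n : ℝ) / j) ^ j * (Nat.factorial j : ℝ) ≤ (Nat.factorial j : ℝ) * (n.choose j : ℝ) := by
    rw [← hdc, ← hdesc] at *
    calc ((n : ℝ) / j) ^ j * (Nat.factorial j : ℝ) = ∏ i ∈ range j, (((n : ℝ) / j) * ((j : ℝ) - i)) := hlhs.symm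
      _ ≤ _ := key
      _ = _ := hdesc
  nlinarith [this]

-- 2^(k-1) ≤ sum of binomials up to (k+1)/2
open Finset in
lemma sum_choose_half (k : ℕ) (hk : 1 ≤ k) :
    2 ^ (k - 1) ≤ ∑ m ∈ range ((k + 1) / 2 + 1), k.choose m := by
  rcases Nat.even_or_odd k with ⟨t, ht⟩ | ⟨t, ht⟩
  · -- k = 2t, t ≥ 1
    obtain ⟨u, rfl⟩ : ∃ u, t = u + 1 := ⟨t - 1, by omega⟩
    have hk2 : k = 2 * (u + 1) := by omega
    subst hk2
    have hidx : (2 * (u + 1) + 1) / 2 + 1 = u + 2 := by omega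
    rw [hidx]
    have h1 : ∑ m ∈ range (u + 1), (2 * u + 1).choose m = 4 ^ u :=
      Nat.sum_range_choose_halfway u
    have h2 : ∑ m ∈ range (u + 2), (2 * u + 1).choose m = 4 ^ u + (2 * u + 1).choose (u + 1) := by
      rw [Finset.sum_range_succ, h1]
    have h3 : ∑ m ∈ range (u + 2), (2 * (u + 1)).choose m
        = (∑ i ∈ range (u + 1), (2 * (u + 1)).choose (i + 1)) + 1 := by
      rw [Finset.sum_range_succ']
      simp
    have h4 : ∀ i, (2 * (u + 1)).choose (i + 1) = (2 * u + 1).choose i + (2 * u + 1).choose (i + 1) := by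
      intro i
      have : 2 * (u + 1) = (2 * u + 1) + 1 := by ring
      rw [this, Nat.choose_succ_succ]
    have h5 : ∑ m ∈ range (u + 2), (2 * u + 1).choose m
        = (∑ i ∈ range (u + 1), (2 * u + 1).choose (i + 1)) + 1 := by
      rw [Finset.sum_range_succ']
      simp
    have h6 : (2 * u + 1).choose (u + 1) ≥ 1 := Nat.choose_pos (by omega)
    have h7 : ∑ i ∈ range (u + 1), (2 * u + 1).choose (i + 1) ≥ 4 ^ u := by omega
    have h8 : ∑ m ∈ range (u + 2), (2 * (u + 1)).choose m
        = (∑ i ∈ range (u + 1), (2 * u + 1).choose i)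
          + (∑ i ∈ range (u + 1), (2 * u + 1).choose (i + 1)) + 1 := by
      rw [h3]
      simp_rw [h4]
      rw [Finset.sum_add_distrib]
    have h9 : (4:ℕ) ^ u = 2 ^ (2 * u) := by rw [pow_mul]; norm_num
    rw [show 2 * (u + 1) - 1 = 2 * u + 1 from by omega, pow_succ]
    omega
  · -- k = 2t + 1
    have hk2 : k = 2 * t + 1 := by omega
    subst hk2
    have hidx : (2 * t + 1 + 1) / 2 + 1 = t + 2 := by omega
    rw [hidx]
    have h1 : ∑ m ∈ range (t + 1), (2 * t + 1).choose m = 4 ^ t :=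
      Nat.sum_range_choose_halfway t
    have h2 : ∑ m ∈ range (t + 2), (2 * t + 1).choose m = 4 ^ t + (2 * t + 1).choose (t + 1) := by
      rw [Finset.sum_range_succ, h1]
    have h9 : (4:ℕ) ^ t = 2 ^ (2 * t) := by rw [pow_mul]; norm_num
    rw [show 2 * t + 1 - 1 = 2 * t from by omega]
    omega


open MeasureTheory ProbabilityTheory ENNReal

set_option maxHeartbeats 1000000 in
/-- if `ω₁, …, ωₙ` are i.i.d. uniform on `[0,1]` and `1 ≤ G ≤ n` with
`√(nG) ≥ 1`, then `E[ |{x ∈ {0,1}ⁿ : Σᵢ xᵢ·ωᵢ ≤ G}| ] ≥ (1/2)·2^{⌊√(nG)⌋}`. -/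
theorem stmt_18 (n : ℕ) (G : ℝ) (hG1 : 1 ≤ G) (hGn : G ≤ n)
    (hnG : 1 ≤ Real.sqrt (n * G)) :
    ∫⁻ w, (({x : Fin n → ℝ | (∀ i, x i = 0 ∨ x i = 1) ∧
        ∑ i, x i * w i ≤ G}.ncard : ℝ≥0∞))
        ∂(Measure.pi fun _ : Fin n => MeasureTheory.volume.restrict (Set.Icc (0 : ℝ) 1))
      ≥ ENNReal.ofReal ((1 / 2) * 2 ^ ⌊Real.sqrt (n * G)⌋₊) := by
  classical
  rw [ge_iff_le]
  set μ : Measure (Fin n → ℝ) :=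
    Measure.pi fun _ : Fin n => MeasureTheory.volume.restrict (Set.Icc (0 : ℝ) 1) with hμ
  obtain ⟨k, hkdef⟩ : ∃ k : ℕ, ⌊Real.sqrt (↑n * G)⌋₊ = k := ⟨_, rfl⟩
  rw [hkdef]
  have hk1 : 1 ≤ k := hkdef ▸ Nat.le_floor (by exact_mod_cast hnG)
  obtain ⟨j, hjdef⟩ : ∃ j : ℕ, (k + 1) / 2 = j := ⟨_, rfl⟩
  have hj1 : 1 ≤ j := by omega
  have hjk : j ≤ k := by omega
  have hG0 : (0 : ℝ) < G := lt_of_lt_of_le one_pos hG1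
  have hjR : (0 : ℝ) < j := by exact_mod_cast hj1
  obtain ⟨q, hqdef⟩ : ∃ q : ℝ, min (G / j) 1 = q := ⟨_, rfl⟩
  have hq0 : 0 ≤ q := hqdef ▸ le_min (by positivity) one_pos.le
  have hq1 : q ≤ 1 := hqdef ▸ min_le_right _ _
  have hjq : (j : ℝ) * q ≤ G := by
    have : q ≤ G / j := hqdef ▸ min_le_left _ _
    calc (j : ℝ) * q ≤ (j : ℝ) * (G / j) := by nlinarith
      _ = G := by field_simp
  have hkn : k ≤ n := by
    have hsq : Real.sqrt (↑n * G) ≤ n := by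
      have h1 : Real.sqrt (↑n * G) ≤ Real.sqrt ((n : ℝ) ^ 2) := Real.sqrt_le_sqrt (by nlinarith)
      rwa [Real.sqrt_sq (by positivity)] at h1
    calc k = ⌊Real.sqrt (↑n * G)⌋₊ := hkdef.symm
      _ ≤ ⌊(n : ℝ)⌋₊ := Nat.floor_le_floor hsq
      _ = n := Nat.floor_natCast n
  have hk2 : ((k : ℝ)) ^ 2 ≤ ↑n * G := by
    have h1 : (k : ℝ) ≤ Real.sqrt (↑n * G) := hkdef ▸ Nat.floor_le (Real.sqrt_nonneg _)
    nlinarith [Real.sq_sqrt (show (0 : ℝ) ≤ ↑n * G by positivity),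
      Real.sqrt_nonneg ((n : ℝ) * G)]
  -- events
  set E : Finset (Fin n) → Set (Fin n → ℝ) :=
    fun A => Set.pi Set.univ (fun i => if i ∈ A then Set.Iic q else Set.univ) with hE
  have hEmeas : ∀ A, MeasurableSet (E A) := by
    intro A
    apply MeasurableSet.univ_pi
    intro i
    by_cases h : i ∈ A <;> simp [h, measurableSet_Iic]
  have hEmem : ∀ A (w : Fin n → ℝ), w ∈ E A ↔ ∀ i ∈ A, w i ≤ q := by
    intro A w
    simp only [hE, Set.mem_pi, Set.mem_univ, forall_true_left]
    constructor
    · intro h i hi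
      have := h i
      simpa [hi] using this
    · intro h i
      by_cases hi : i ∈ A <;> simp [hi, h]
  set 𝒜 : Finset (Finset (Fin n)) :=
    (Finset.range (j + 1)).biUnion (fun m => Finset.powersetCard m Finset.univ) with h𝒜
  have h𝒜mem : ∀ A : Finset (Fin n), A ∈ 𝒜 ↔ A.card ≤ j := by
    intro A
    simp only [h𝒜, Finset.mem_biUnion, Finset.mem_range, Finset.mem_powersetCard_univ]
    constructor
    · rintro ⟨m, hm, rfl⟩; omega
    · intro h; exact ⟨A.card, by omega, rfl⟩
  -- pointwise bound
  have hpt : ∀ w : Fin n → ℝ,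
      (∑ A ∈ 𝒜, (E A).indicator (fun _ => (1 : ℝ≥0∞)) w)
        ≤ (({x : Fin n → ℝ | (∀ i, x i = 0 ∨ x i = 1) ∧
            ∑ i, x i * w i ≤ G}.ncard : ℝ≥0∞)) := by
    intro w
    have hsum : ∑ A ∈ 𝒜, (E A).indicator (fun _ => (1 : ℝ≥0∞)) w
        = ((𝒜.filter (fun A => w ∈ E A)).card : ℝ≥0∞) := by
      rw [Finset.card_filter]
      push_cast
      refine Finset.sum_congr rfl fun A hA => ?_
      by_cases h : w ∈ E A <;> simp [h, Set.indicator]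
    rw [hsum, Nat.cast_le]
    set S : Set (Fin n → ℝ) := {x : Fin n → ℝ | (∀ i, x i = 0 ∨ x i = 1) ∧
      ∑ i, x i * w i ≤ G} with hS
    set φ : Finset (Fin n) → (Fin n → ℝ) := fun A i => if i ∈ A then (1 : ℝ) else 0 with hφ
    have hinj : Function.Injective φ := by
      intro A B hAB
      ext i
      have := congrFun hAB i
      by_cases hA : i ∈ A <;> by_cases hB : i ∈ B <;>
        simp [hφ, hA, hB] at this ⊢ <;> norm_num at this
    have hSfin : S.Finite := by
      apply Set.Finite.subset (Set.Finite.pi (fun _ : Fin n => Set.toFinite ({0, 1} : Set ℝ)))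
      intro x hx
      simp only [Set.mem_pi, Set.mem_univ, forall_true_left]
      intro i
      rcases hx.1 i with h | h <;> simp [h]
    have hsub : ↑((𝒜.filter (fun A => w ∈ E A)).image φ) ⊆ S := by
      intro x hx
      simp only [Finset.coe_image, Set.mem_image, Finset.mem_coe, Finset.mem_filter] at hx
      obtain ⟨A, ⟨hA𝒜, hAw⟩, rfl⟩ := hx
      constructor
      · intro i
        by_cases h : i ∈ A <;> simp [hφ, h]
      · have hxw : ∑ i, φ A i * w i = ∑ i ∈ A, w i := by
          simp only [hφ, ite_mul, one_mul, zero_mul]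
          rw [Finset.sum_ite_mem, Finset.univ_inter]
        rw [hxw]
        have hcard : A.card ≤ j := (h𝒜mem A).1 hA𝒜
        have hwq : ∀ i ∈ A, w i ≤ q := (hEmem A w).1 hAw
        calc ∑ i ∈ A, w i ≤ ∑ _i ∈ A, q := Finset.sum_le_sum hwq
          _ = A.card * q := by rw [Finset.sum_const, nsmul_eq_mul]
          _ ≤ (j : ℝ) * q := by
            have : (A.card : ℝ) ≤ j := by exact_mod_cast hcard
            nlinarith
          _ ≤ G := hjq
    calc (𝒜.filter (fun A => w ∈ E A)).card
        = ((𝒜.filter (fun A => w ∈ E A)).image φ).card :=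
          (Finset.card_image_of_injective _ hinj).symm
      _ = (↑((𝒜.filter (fun A => w ∈ E A)).image φ) : Set (Fin n → ℝ)).ncard :=
          (Set.ncard_coe_finset _).symm
      _ ≤ S.ncard := Set.ncard_le_ncard hsub hSfin
  -- measure of events
  have hμE : ∀ A : Finset (Fin n), μ (E A) = ENNReal.ofReal q ^ A.card := by
    intro A
    rw [hμ, hE]
    rw [MeasureTheory.Measure.pi_pi]
    have h1 : ∀ i : Fin n,
        (MeasureTheory.volume.restrict (Set.Icc (0 : ℝ) 1))
          (if i ∈ A then Set.Iic q else Set.univ)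
        = if i ∈ A then ENNReal.ofReal q else 1 := by
      intro i
      by_cases h : i ∈ A
      · simp only [h, if_true]
        rw [Measure.restrict_apply measurableSet_Iic]
        have : Set.Iic q ∩ Set.Icc (0 : ℝ) 1 = Set.Icc 0 q := by
          ext x
          simp only [Set.mem_inter_iff, Set.mem_Iic, Set.mem_Icc]
          constructor
          · rintro ⟨h1, h2, h3⟩; exact ⟨h2, h1⟩
          · rintro ⟨h1, h2⟩; exact ⟨h2, h1, le_trans h2 hq1⟩
        rw [this, Real.volume_Icc, sub_zero]
      · simp only [h, if_false]
        rw [Measure.restrict_apply MeasurableSet.univ, Set.univ_inter, Real.volume_Icc]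
        norm_num
    simp_rw [h1]
    rw [Finset.prod_ite_mem, Finset.univ_inter, Finset.prod_const]
  -- integral bound
  have hmeas : ∀ A ∈ 𝒜, Measurable ((E A).indicator (fun _ => (1 : ℝ≥0∞))) :=
    fun A _ => measurable_const.indicator (hEmeas A)
  have hint : ∫⁻ w, (∑ A ∈ 𝒜, (E A).indicator (fun _ => (1 : ℝ≥0∞)) w) ∂μ
      = ∑ A ∈ 𝒜, ENNReal.ofReal q ^ A.card := by
    rw [MeasureTheory.lintegral_finset_sum _ hmeas]
    refine Finset.sum_congr rfl fun A _ => ?_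
    rw [MeasureTheory.lintegral_indicator (hEmeas A), MeasureTheory.setLIntegral_one]
    exact hμE A
  -- final combinatorial bound
  have hfinal : ENNReal.ofReal ((1 / 2) * 2 ^ k) ≤ ∑ A ∈ 𝒜, ENNReal.ofReal q ^ A.card := by
    rcases le_or_gt (j : ℝ) G with hcase | hcase
    · -- q = 1
      have hq : q = 1 := by
        rw [← hqdef]
        exact min_eq_right ((one_le_div hjR).2 hcase)
      have hof1 : ENNReal.ofReal q = 1 := by rw [hq]; simp
      rw [hof1]
      simp only [one_pow, Finset.sum_const, nsmul_eq_mul, mul_one]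
      -- goal : ofReal ((1/2)*2^k) ≤ 𝒜.card
      have hdisj : ∀ x ∈ Finset.range (j + 1), ∀ y ∈ Finset.range (j + 1), x ≠ y →
          Disjoint (Finset.powersetCard x (Finset.univ : Finset (Fin n)))
            (Finset.powersetCard y Finset.univ) := by
        intro x _ y _ hxy
        rw [Finset.disjoint_left]
        intro A hAx hAy
        rw [Finset.mem_powersetCard_univ] at hAx hAy
        exact hxy (hAx ▸ hAy ▸ rfl)
      have hcard : 𝒜.card = ∑ m ∈ Finset.range (j + 1), n.choose m := by
        rw [h𝒜, Finset.card_biUnion hdisj]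
        refine Finset.sum_congr rfl fun m _ => ?_
        rw [Finset.card_powersetCard, Finset.card_univ, Fintype.card_fin]
      have hnat : 2 ^ (k - 1) ≤ 𝒜.card := by
        rw [hcard]
        calc 2 ^ (k - 1) ≤ ∑ m ∈ Finset.range ((k + 1) / 2 + 1), k.choose m :=
              sum_choose_half k hk1
          _ = ∑ m ∈ Finset.range (j + 1), k.choose m := by rw [hjdef]
          _ ≤ ∑ m ∈ Finset.range (j + 1), n.choose m :=
            Finset.sum_le_sum fun m _ => Nat.choose_le_choose m hkn
      have hreal : ((1 : ℝ) / 2) * 2 ^ k ≤ (𝒜.card : ℝ) := by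
        have h2 : ((1 : ℝ) / 2) * 2 ^ k = 2 ^ (k - 1) := by
          have hx : (2 : ℝ) ^ k = 2 ^ (k - 1) * 2 := by
            rw [← pow_succ, show k - 1 + 1 = k from by omega]
          rw [hx]; ring
        rw [h2]
        exact_mod_cast hnat
      calc ENNReal.ofReal ((1 / 2) * 2 ^ k) ≤ ENNReal.ofReal (𝒜.card : ℝ) :=
            ENNReal.ofReal_le_ofReal hreal
        _ = (𝒜.card : ℝ≥0∞) := ENNReal.ofReal_natCast _
    · -- q = G / j < 1
      have hq : q = G / j := by
        rw [← hqdef]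
        exact min_eq_left (le_of_lt ((div_lt_one hjR).2 hcase))
      have hsub : Finset.powersetCard j (Finset.univ : Finset (Fin n)) ⊆ 𝒜 := by
        intro A hA
        rw [h𝒜mem]
        rw [Finset.mem_powersetCard_univ] at hA
        omega
      have hterm : (n.choose j : ℝ≥0∞) * ENNReal.ofReal q ^ j
          ≤ ∑ A ∈ 𝒜, ENNReal.ofReal q ^ A.card := by
        calc (n.choose j : ℝ≥0∞) * ENNReal.ofReal q ^ j
            = ∑ A ∈ Finset.powersetCard j (Finset.univ : Finset (Fin n)),
                ENNReal.ofReal q ^ A.card := by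
              rw [Finset.sum_congr rfl (fun A hA => by
                rw [(Finset.mem_powersetCard_univ.1 hA : A.card = j)]),
                Finset.sum_const, Finset.card_powersetCard, Finset.card_univ,
                Fintype.card_fin, nsmul_eq_mul]
          _ ≤ _ := Finset.sum_le_sum_of_subset hsub
      refine le_trans ?_ hterm
      have hjn : j ≤ n := le_trans hjk hkn
      have hchoose : ((n : ℝ) / j) ^ j ≤ (n.choose j : ℝ) := choose_lb n j hjn
      -- real inequality : (1/2)*2^k ≤ choose * q^j
      have hreal : ((1 : ℝ) / 2) * 2 ^ k ≤ (n.choose j : ℝ) * q ^ j := by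
        have hqj : (0:ℝ) < q := by rw [hq]; positivity
        have step1 : ((↑n * G) / ((j : ℝ) * j)) ^ j ≤ (n.choose j : ℝ) * q ^ j := by
          have : ((↑n * G) / ((j : ℝ) * j)) ^ j = ((n : ℝ) / j) ^ j * (G / j) ^ j := by
            rw [← mul_pow]
            congr 1
            field_simp
          rw [this, hq]
          have hpos : (0:ℝ) ≤ (G / (j:ℝ)) ^ j := by positivity
          nlinarith [pow_nonneg (by positivity : (0:ℝ) ≤ (n : ℝ) / j) j]
        have step2 : (((k : ℝ) * k) / ((j : ℝ) * j)) ^ j ≤ ((↑n * G) / ((j : ℝ) * j)) ^ j := by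
          apply pow_le_pow_left₀ (by positivity)
          apply div_le_div_of_nonneg_right ?_ (by positivity)
          nlinarith
        have step3 : ((1 : ℝ) / 2) * 2 ^ k ≤ (((k : ℝ) * k) / ((j : ℝ) * j)) ^ j := by
          have hpar : k = 2 * j ∨ k + 1 = 2 * j := by omega
          rcases hpar with hpar | hpar
          · have hkr : (k : ℝ) = 2 * (j : ℝ) := by exact_mod_cast congrArg (Nat.cast (R := ℝ)) hpar
            have h4 : ((k : ℝ) * k) / ((j : ℝ) * j) = 4 := by
              rw [hkr]; field_simp; ring
            have h2k : (2 : ℝ) ^ k = 4 ^ j := by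
              rw [hpar, pow_mul]; norm_num
            rw [h4, ← h2k]
            nlinarith [pow_pos (show (0:ℝ) < 2 from by norm_num) k]
          · have hkr : (k : ℝ) = 2 * (j : ℝ) - 1 := by
              have : ((k + 1 : ℕ) : ℝ) = ((2 * j : ℕ) : ℝ) := by exact_mod_cast congrArg (Nat.cast (R := ℝ)) hpar
              push_cast at this
              linarith
            have hjR1 : (1 : ℝ) ≤ (j : ℝ) := by exact_mod_cast hj1
            set a : ℝ := 1 - 1 / (2 * (j : ℝ)) with ha
            have h2j : (0 : ℝ) < 2 * (j : ℝ) := by positivity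
            have hber : (1 / 2 : ℝ) ≤ a ^ j := by
              have hle : 1 / (2 * (j : ℝ)) ≤ 1 := by
                rw [div_le_one h2j]; linarith
              have hB := one_add_mul_le_pow
                (show (-2 : ℝ) ≤ -(1 / (2 * (j : ℝ))) from by
                  have : (0:ℝ) ≤ 1 / (2 * (j : ℝ)) := by positivity
                  linarith) j
              calc (1 / 2 : ℝ) = 1 + (j : ℝ) * -(1 / (2 * (j : ℝ))) := by
                    field_simp; ring
                _ ≤ (1 + -(1 / (2 * (j : ℝ)))) ^ j := hB
                _ = a ^ j := by rw [ha]; ring_nf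
            have hfrac : ((k : ℝ) * k) / ((j : ℝ) * j) = (2 * a) ^ 2 := by
              rw [hkr, ha]; field_simp
            have hexp : ((2 * a) ^ 2) ^ j = 2 ^ (2 * j) * (a ^ j) ^ 2 := by
              rw [← pow_mul, mul_pow, ← pow_mul, Nat.mul_comm j 2]
            have h2k : (2 : ℝ) ^ (2 * j) = 2 * 2 ^ k := by
              rw [show 2 * j = k + 1 from by omega, pow_succ]; ring
            rw [hfrac, hexp, h2k]
            nlinarith [hber, pow_pos (show (0:ℝ) < 2 from by norm_num) k,
              sq_nonneg (a ^ j - 1 / 2)]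
        linarith [le_trans step3 (le_trans step2 step1)]
      calc ENNReal.ofReal ((1 / 2) * 2 ^ k)
          ≤ ENNReal.ofReal ((n.choose j : ℝ) * q ^ j) := ENNReal.ofReal_le_ofReal hreal
        _ = (n.choose j : ℝ≥0∞) * ENNReal.ofReal q ^ j := by
            rw [ENNReal.ofReal_mul (by positivity), ENNReal.ofReal_natCast,
              ENNReal.ofReal_pow hq0]
  calc ENNReal.ofReal ((1 / 2) * 2 ^ k)
      ≤ ∑ A ∈ 𝒜, ENNReal.ofReal q ^ A.card := hfinal
    _ = ∫⁻ w, (∑ A ∈ 𝒜, (E A).indicator (fun _ => (1 : ℝ≥0∞)) w) ∂μ := hint.symm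
    _ ≤ _ := MeasureTheory.lintegral_mono hpt
end
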